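/- arXiv:2409.02193 — 3 statements merged into one kernel-verified Lean document; each statement's English description precedes it below -/
import Mathlib

section
/- Let (H_X, H_Z) be a CSS code that has at least one Z logical operator, with Z distance d_Z, and let q ≥ 2. Let H'_X, H'_Z be the check matrices of the copied code. Then the copied code has at least one Z logical operator, and its Z distance equals q·d_Z: the minimum Hamming weight over ker(H'_X) \ rowspan(H'_Z) equals q times the minimum Hamming weight over ker(H_X) \ rowspan(H_Z). -/
open Matrix

/-- The `F₂`-span of the rows of a matrix. -/
noncomputable def rowSpan {ι κ : Type*} [Fintype ι] [Fintype κ] (M : Matrix ι κ (ZMod 2)) :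
    Submodule (ZMod 2) (κ → ZMod 2) :=
  Submodule.span (ZMod 2) (Set.range fun i => M i)

/-- The kernel `{v : M v = 0}` of a matrix, as a submodule. -/
noncomputable def kerMat {ι κ : Type*} [Fintype ι] [Fintype κ] (M : Matrix ι κ (ZMod 2)) :
    Submodule (ZMod 2) (κ → ZMod 2) :=
  LinearMap.ker M.mulVecLin

/-- The logical operators `ker(Hker) \ rowspan(Hspan)`. -/
def logicalSet {ι₁ ι₂ κ : Type*} [Fintype ι₁] [Fintype ι₂] [Fintype κ]
    (Hker : Matrix ι₁ κ (ZMod 2)) (Hspan : Matrix ι₂ κ (ZMod 2)) : Set (κ → ZMod 2) :=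
  {v | Hker.mulVec v = 0 ∧ v ∉ rowSpan Hspan}

/-- Minimum Hamming weight over a set of vectors. -/
noncomputable def minWt {ι : Type*} [Fintype ι] (S : Set (ι → ZMod 2)) : ℕ :=
  sInf (hammingNorm '' S)

/-- Parity check matrix of the `[q,1,q]` repetition code: row `j` is `e_j + e_{j+1}`. -/
def repCheck (q : ℕ) : Matrix (Fin (q - 1)) (Fin q) (ZMod 2) :=
  Matrix.of fun j c => if c.val = j.val ∨ c.val = j.val + 1 then 1 else 0

/-- `I_n ⊗ H_R` acting on `F₂^n ⊗ F₂^q`. -/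
def idKronRep (n q : ℕ) : Matrix (Fin n × Fin (q - 1)) (Fin n × Fin q) (ZMod 2) :=
  Matrix.of fun b p => if p.1 = b.1 then repCheck q b.2 p.2 else 0

/-- `H_X ⊗ ê₁ᵀ` where `ê₁ = (1,0,…,0) ∈ F₂^q`. -/
def kronE1 {nX n : ℕ} (q : ℕ) (HX : Matrix (Fin nX) (Fin n) (ZMod 2)) :
    Matrix (Fin nX) (Fin n × Fin q) (ZMod 2) :=
  Matrix.of fun a p => if p.2.val = 0 then HX a p.1 else 0

/-- X check matrix of the copied code: `H_X ⊗ ê₁ᵀ` stacked on top of `I_n ⊗ H_R`. -/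
def copyX {nX n : ℕ} (q : ℕ) (HX : Matrix (Fin nX) (Fin n) (ZMod 2)) :
    Matrix (Fin nX ⊕ (Fin n × Fin (q - 1))) (Fin n × Fin q) (ZMod 2) :=
  Matrix.of fun s p =>
    match s with
    | Sum.inl a => kronE1 q HX a p
    | Sum.inr b => idKronRep n q b p

/-- Z check matrix of the copied code: `H_Z ⊗ 1_qᵀ`. -/
def copyZ {nZ n : ℕ} (q : ℕ) (HZ : Matrix (Fin nZ) (Fin n) (ZMod 2)) :
    Matrix (Fin nZ) (Fin n × Fin q) (ZMod 2) :=
  Matrix.of fun s p => HZ s p.1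

section Aux

lemma sum_ite_val_eq {q : ℕ} (m : ℕ) (hm : m < q) (f : Fin q → ZMod 2) :
    ∑ k : Fin q, (if k.val = m then f k else 0) = f ⟨m, hm⟩ := by
  rw [Finset.sum_eq_single_of_mem ⟨m, hm⟩ (Finset.mem_univ _)]
  · exact if_pos rfl
  · intro k _ hk
    exact if_neg (by simpa [Fin.ext_iff] using hk)

lemma sum_repCheck {q : ℕ} (j : Fin (q - 1)) (h2 : j.val + 1 < q) (w : Fin q → ZMod 2) :
    ∑ k, repCheck q j k * w k
      = w ⟨j.val, Nat.lt_of_succ_lt h2⟩ + w ⟨j.val + 1, h2⟩ := by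
  have key : ∀ k : Fin q, repCheck q j k * w k
      = (if k.val = j.val then w k else 0) + (if k.val = j.val + 1 then w k else 0) := by
    intro k
    by_cases h1 : k.val = j.val <;> by_cases hb : k.val = j.val + 1 <;>
      simp [repCheck, h1, hb] <;> omega
  rw [Finset.sum_congr rfl fun k _ => key k, Finset.sum_add_distrib,
    sum_ite_val_eq j.val (Nat.lt_of_succ_lt h2), sum_ite_val_eq (j.val + 1) h2]

lemma zmod2_eq_of_add_eq_zero : ∀ x y : ZMod 2, x + y = 0 → y = x := by decide

lemma zmod2_add_self (x : ZMod 2) : x + x = 0 := by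
  revert x; decide

lemma copyX_mulVec_inl {nX n q : ℕ} (h0q : 0 < q)
    (HX : Matrix (Fin nX) (Fin n) (ZMod 2)) (v : Fin n × Fin q → ZMod 2) (a : Fin nX) :
    (copyX q HX).mulVec v (Sum.inl a) = ∑ i, HX a i * v (i, ⟨0, h0q⟩) := by
  simp only [Matrix.mulVec, dotProduct]
  rw [Fintype.sum_prod_type]
  refine Finset.sum_congr rfl fun i _ => ?_
  have key : ∀ k : Fin q, copyX q HX (Sum.inl a) (i, k) * v (i, k)
      = if k.val = 0 then (fun k : Fin q => HX a i * v (i, k)) k else 0 := by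
    intro k
    by_cases hk : k.val = 0 <;> simp [copyX, kronE1, hk]
  rw [Finset.sum_congr rfl fun k _ => key k, sum_ite_val_eq 0 h0q]

lemma copyX_mulVec_inr {nX n q : ℕ}
    (HX : Matrix (Fin nX) (Fin n) (ZMod 2)) (v : Fin n × Fin q → ZMod 2)
    (i : Fin n) (j : Fin (q - 1)) (h2 : j.val + 1 < q) :
    (copyX q HX).mulVec v (Sum.inr (i, j))
      = v (i, ⟨j.val, Nat.lt_of_succ_lt h2⟩) + v (i, ⟨j.val + 1, h2⟩) := by
  simp only [Matrix.mulVec, dotProduct]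
  rw [Fintype.sum_prod_type]
  rw [Finset.sum_eq_single_of_mem i (Finset.mem_univ _) ?_]
  · have key : ∀ k : Fin q, copyX q HX (Sum.inr (i, j)) (i, k) * v (i, k)
        = repCheck q j k * v (i, k) := by
      intro k; simp [copyX, idKronRep]
    rw [Finset.sum_congr rfl fun k _ => key k]
    exact sum_repCheck j h2 _
  · intro b _ hb
    refine Finset.sum_eq_zero fun k _ => ?_
    simp [copyX, idKronRep, hb]

lemma mulVec_copyX_eq_zero_iff {nX n q : ℕ} (hq : 2 ≤ q)
    (HX : Matrix (Fin nX) (Fin n) (ZMod 2)) (v : Fin n × Fin q → ZMod 2) :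
    (copyX q HX).mulVec v = 0 ↔
      ∃ c : Fin n → ZMod 2, HX.mulVec c = 0 ∧ v = fun p => c p.1 := by
  have h0q : 0 < q := by omega
  constructor
  · intro h
    set c : Fin n → ZMod 2 := fun i => v (i, ⟨0, h0q⟩) with hcdef
    have hconst : ∀ (i : Fin n) (k : Fin q), v (i, k) = c i := by
      intro i k
      obtain ⟨m, hm⟩ := k
      induction m with
      | zero => rfl
      | succ m ih =>
        have hm' : m < q - 1 := by omega
        have h0 := congrFun h (Sum.inr (i, ⟨m, hm'⟩))
        rw [copyX_mulVec_inr HX v i ⟨m, hm'⟩ (by omega)] at h0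
        have h2 := zmod2_eq_of_add_eq_zero _ _ h0
        rw [h2]
        exact ih (by omega)
    refine ⟨c, ?_, funext fun p => hconst p.1 p.2⟩
    ext a
    have h0 := congrFun h (Sum.inl a)
    rw [copyX_mulVec_inl h0q HX v a] at h0
    simpa [Matrix.mulVec, dotProduct] using h0
  · rintro ⟨c, hc, rfl⟩
    funext s
    cases s with
    | inl a =>
      rw [copyX_mulVec_inl h0q HX _ a]
      have := congrFun hc a
      simpa [Matrix.mulVec, dotProduct] using this
    | inr b =>
      obtain ⟨i, j⟩ := b
      rw [copyX_mulVec_inr HX _ i j (by have := j.isLt; omega)]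
      exact zmod2_add_self (c i)

lemma rowSpan_copyZ {nZ n : ℕ} (q : ℕ) (HZ : Matrix (Fin nZ) (Fin n) (ZMod 2)) :
    rowSpan (copyZ q HZ)
      = Submodule.map
          (LinearMap.funLeft (ZMod 2) (ZMod 2) (Prod.fst : Fin n × Fin q → Fin n))
          (rowSpan HZ) := by
  unfold rowSpan
  rw [Submodule.map_span]
  congr 1
  rw [← Set.range_comp]
  rfl

lemma hammingNorm_comp_fst {n q : ℕ} (c : Fin n → ZMod 2) :
    hammingNorm (fun p : Fin n × Fin q => c p.1) = q * hammingNorm c := by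
  classical
  unfold hammingNorm
  have : ({p : Fin n × Fin q | c p.1 ≠ 0} : Finset (Fin n × Fin q))
      = ({i : Fin n | c i ≠ 0} : Finset (Fin n)) ×ˢ (Finset.univ : Finset (Fin q)) := by
    ext p
    simp [Finset.mem_product]
  rw [this, Finset.card_product]
  simp [mul_comm]

lemma sInf_mul_image {q : ℕ} {S : Set ℕ} (hS : S.Nonempty) :
    sInf ((fun m => q * m) '' S) = q * sInf S := by
  apply le_antisymm
  · exact Nat.sInf_le ⟨sInf S, Nat.sInf_mem hS, rfl⟩
  · obtain ⟨m, hm, heq⟩ := Nat.sInf_mem (hS.image fun m => q * m)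
    rw [← heq]
    exact Nat.mul_le_mul_left q (Nat.sInf_le hm)

end Aux

/-- **Copying multiplies the Z distance by `q`.** -/
theorem copying_Z_distance {nX nZ n q : ℕ} (hq : 2 ≤ q)
    (HX : Matrix (Fin nX) (Fin n) (ZMod 2)) (HZ : Matrix (Fin nZ) (Fin n) (ZMod 2))
    (hcss : HX * HZ.transpose = 0)
    (hlog : (logicalSet HX HZ).Nonempty) :
    (logicalSet (copyX q HX) (copyZ q HZ)).Nonempty ∧
      minWt (logicalSet (copyX q HX) (copyZ q HZ)) = q * minWt (logicalSet HX HZ) := by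
  set φ := LinearMap.funLeft (ZMod 2) (ZMod 2) (Prod.fst : Fin n × Fin q → Fin n) with hφ
  have h0q : 0 < q := by omega
  have hφinj : Function.Injective φ :=
    LinearMap.funLeft_injective_of_surjective _ _ _
      (fun i => ⟨(i, ⟨0, h0q⟩), rfl⟩)
  have hset : logicalSet (copyX q HX) (copyZ q HZ) = φ '' logicalSet HX HZ := by
    ext v
    constructor
    · rintro ⟨hker, hspan⟩
      obtain ⟨c, hc, rfl⟩ := (mulVec_copyX_eq_zero_iff hq HX v).mp hker
      refine ⟨c, ⟨hc, fun hmem => hspan ?_⟩, rfl⟩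
      rw [rowSpan_copyZ]
      exact Submodule.mem_map_of_mem hmem
    · rintro ⟨c, ⟨hc, hcs⟩, rfl⟩
      refine ⟨(mulVec_copyX_eq_zero_iff hq HX _).mpr ⟨c, hc, rfl⟩, fun hmem => hcs ?_⟩
      rw [rowSpan_copyZ] at hmem
      obtain ⟨c', hc', he⟩ := hmem
      rwa [← hφinj he]
  constructor
  · rw [hset]
    exact hlog.image φ
  · rw [hset]
    unfold minWt
    rw [Set.image_image]
    have : (fun v => hammingNorm (φ v)) '' logicalSet HX HZ
        = (fun m => q * m) '' (hammingNorm '' logicalSet HX HZ) := by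
      rw [Set.image_image]
      exact Set.image_congr fun v _ => hammingNorm_comp_fst v
    rw [this, sInf_mul_image (hlog.image _)]
end

section
/- Let H_X ∈ F₂^{n_X × n}, let q ≥ 2, and let H_R ∈ F₂^{(q−1) × q} be the repetition-code parity check matrix. Let H'_X be the matrix obtained by stacking H_X ⊗ ê₁ᵀ on top of I_n ⊗ H_R, where ê₁ = (1,0,…,0) ∈ F₂^q. Then ker(H'_X) = { L ⊗ 1_q : L ∈ ker(H_X) }, where 1_q ∈ F₂^q is the all-ones vector. -/
open Matrix

/-! The rows `I_n ⊗ H_R` say that `v` is constant along each copy `{i} × Fin q`, so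
`v = L ⊗ 1_q` with `L` the first copy; the rows `H_X ⊗ ê₁ᵀ` then read exactly `H_X L = 0`. -/

lemma repCheck_mulVec_apply {q : ℕ} (w : Fin q → ZMod 2) (j : Fin (q - 1)) :
    (repCheck q *ᵥ w) j = w ⟨j, by omega⟩ + w ⟨j + 1, by omega⟩ := by
  simp only [mulVec, dotProduct, repCheck, of_apply]
  rw [Fintype.sum_eq_add (⟨j, by omega⟩ : Fin q) ⟨j + 1, by omega⟩ (by simp [Fin.ext_iff])
    fun c hc => ?_]
  · simp
  · simp only [ne_eq, Fin.ext_iff] at hc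
    simp [hc.1, hc.2]

lemma repCheck_mulVec_eq_zero_iff {q : ℕ} (hq : 0 < q) (w : Fin q → ZMod 2) :
    repCheck q *ᵥ w = 0 ↔ w = Function.const _ (w ⟨0, hq⟩) := by
  constructor
  · intro hw
    have hstep (k : ℕ) (hk : k + 1 < q) : w ⟨k + 1, hk⟩ = w ⟨k, by omega⟩ := by
      have := congrFun hw ⟨k, by omega⟩
      rw [repCheck_mulVec_apply] at this
      exact (CharTwo.add_eq_zero.mp this).symm
    funext ⟨k, hk⟩
    induction k with
    | zero => rfl
    | succ k ih => exact (hstep k hk).trans (ih (by omega))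
  · intro hw
    funext j
    rw [repCheck_mulVec_apply, hw]
    exact CharTwo.add_self_eq_zero _

lemma kronE1_mulVec {nX n q : ℕ} (hq : 0 < q) (HX : Matrix (Fin nX) (Fin n) (ZMod 2))
    (v : Fin n × Fin q → ZMod 2) :
    kronE1 q HX *ᵥ v = HX *ᵥ fun i => v (i, ⟨0, hq⟩) := by
  funext a
  simp only [mulVec, dotProduct, kronE1, of_apply, Fintype.sum_prod_type]
  refine Finset.sum_congr rfl fun i _ => ?_
  rw [Fintype.sum_eq_single ⟨0, hq⟩ fun c hc => by simp [Fin.ext_iff] at hc; simp [hc]]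
  simp

lemma idKronRep_mulVec_apply {n q : ℕ} (v : Fin n × Fin q → ZMod 2) (i : Fin n)
    (j : Fin (q - 1)) :
    (idKronRep n q *ᵥ v) (i, j) = (repCheck q *ᵥ fun c => v (i, c)) j := by
  simp only [mulVec, dotProduct, idKronRep, of_apply, Fintype.sum_prod_type, ite_mul, zero_mul]
  rw [Fintype.sum_eq_single i fun i' hi' => by simp [hi']]
  simp

lemma idKronRep_mulVec_eq_zero_iff {n q : ℕ} (v : Fin n × Fin q → ZMod 2) :
    idKronRep n q *ᵥ v = 0 ↔ ∀ i, repCheck q *ᵥ (fun c => v (i, c)) = 0 := by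
  simp only [funext_iff, Prod.forall, idKronRep_mulVec_apply, Pi.zero_apply]

lemma copyX_eq_fromRows {nX n q : ℕ} (HX : Matrix (Fin nX) (Fin n) (ZMod 2)) :
    copyX q HX = fromRows (kronE1 q HX) (idKronRep n q) := by
  ext (_ | _) p <;> rfl

/-- **Kernel of the copied X check matrix:** `ker(H'_X) = { L ⊗ 1_q : L ∈ ker(H_X) }`. -/
theorem copied_X_kernel {nX n q : ℕ} (hq : 2 ≤ q)
    (HX : Matrix (Fin nX) (Fin n) (ZMod 2)) :
    {v : Fin n × Fin q → ZMod 2 | (copyX q HX).mulVec v = 0} =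
      {v : Fin n × Fin q → ZMod 2 |
        ∃ L : Fin n → ZMod 2, HX.mulVec L = 0 ∧ v = fun p => L p.1} := by
  have hq0 : 0 < q := by omega
  ext v
  rw [Set.mem_ofPred_eq, Set.mem_ofPred_eq, copyX_eq_fromRows, fromRows_mulVec,
    ← Sum.elim_zero_zero, Sum.elim_eq_iff, kronE1_mulVec hq0, idKronRep_mulVec_eq_zero_iff]
  simp_rw [repCheck_mulVec_eq_zero_iff hq0]
  constructor
  · rintro ⟨hL, hconst⟩
    exact ⟨_, hL, funext fun p => congrFun (hconst p.1) p.2⟩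
  · rintro ⟨L, hL, rfl⟩
    exact ⟨hL, fun i => rfl⟩
end

section
/- Let (H_X, H_Z) be a CSS code and H_C ∈ F₂^{(n_c−k_c) × n_c} a classical parity check matrix of full row rank. Let H'_X, H'_Z be the check matrices of the generalized thickened code. Then: (1) ker(H'_Z) = rowspan(H'_X) + span{ (x ⊗ v, 0) : x ∈ ker(H_Z), v ∈ ker(H_C) }, where (x ⊗ v, 0) denotes the vector supported on region A equal to the Kronecker product x ⊗ v and zero on region B; and (2) for every x ∈ ker(H_Z) \ rowspan(H_X) and every nonzero v ∈ ker(H_C), the vector (x ⊗ v, 0) does NOT lie in rowspan(H'_X). In other words, the X logical operators of the thickened code are spanned, modulo X stabilizers, by ( (ker H_Z / rowspan H_X) ⊗ ker H_C | 0 ). -/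
/-!
Write a qubit vector of the thickened code as a pair `(W, U)` of matrices, its region A part
`W : F₂^{n × n_c}` and its region B part `U : F₂^{n_X × (n_c - k_c)}`. Then `H'_Z` acts as
`(W, U) ↦ (H_Z W, W H_Cᵀ + H_Xᵀ U)` and the rows of `H'_X` span `{(H_Xᵀ M, M H_Cᵀ)}`.

Since `H_C` has full row rank it has a right inverse, so for `w = (W, U) ∈ ker H'_Z` the
stabilizer with `M H_Cᵀ = U` clears region B. What is left is some `(W', 0)` with
`H_Z W' = 0` and `W' H_Cᵀ = 0`; expanding the rows of `W'` in a basis of `ker H_C` writes it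
as a sum of `x ⊗ v` with `x ∈ ker H_Z`, `v ∈ ker H_C`. Conversely, if
`(x ⊗ v, 0) = (H_Xᵀ M, M H_Cᵀ)` and `v c ≠ 0`, then column `c` gives
`x = (v c)⁻¹ H_Xᵀ M_{·c} ∈ rowspan H_X`.
-/

open Matrix

/-- X check matrix of the generalized thickened code: `( H_X ⊗ I_{n_c} | I_{n_X} ⊗ H_Cᵀ )`.
Region A qubits are indexed by `Fin n × Fin nc`, region B qubits by `Fin nX × Fin r`. -/
def thickX {nX n r nc : ℕ} (HX : Matrix (Fin nX) (Fin n) (ZMod 2))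
    (HC : Matrix (Fin r) (Fin nc) (ZMod 2)) :
    Matrix (Fin nX × Fin nc) ((Fin n × Fin nc) ⊕ (Fin nX × Fin r)) (ZMod 2) :=
  Matrix.of fun s p =>
    match p with
    | Sum.inl (i, c) => if c = s.2 then HX s.1 i else 0
    | Sum.inr (x, j) => if x = s.1 then HC j s.2 else 0

/-- Z check matrix of the generalized thickened code:
first block row `( H_Z ⊗ I_{n_c} | 0 )`,
second block row `( I_n ⊗ H_C | H_Xᵀ ⊗ I_{n_c-k_c} )`. -/
def thickZ {nX nZ n r nc : ℕ} (HX : Matrix (Fin nX) (Fin n) (ZMod 2))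
    (HZ : Matrix (Fin nZ) (Fin n) (ZMod 2)) (HC : Matrix (Fin r) (Fin nc) (ZMod 2)) :
    Matrix ((Fin nZ × Fin nc) ⊕ (Fin n × Fin r)) ((Fin n × Fin nc) ⊕ (Fin nX × Fin r)) (ZMod 2) :=
  Matrix.of fun s p =>
    match s, p with
    | Sum.inl (z, c), Sum.inl (i, c') => if c' = c then HZ z i else 0
    | Sum.inl _, Sum.inr _ => 0
    | Sum.inr (i, j), Sum.inl (i', c) => if i' = i then HC j c else 0
    | Sum.inr (i, j), Sum.inr (x, j') => if j' = j then HX x i else 0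


namespace Matrix

variable {K ι κ l m n : Type*} [Field K]

theorem exists_mul_eq_one_of_linearIndependent_row [Fintype m] [Fintype n] [DecidableEq m]
    {A : Matrix m n K} (h : LinearIndependent K A.row) : ∃ B : Matrix n m K, A * B = 1 := by
  refine mulVec_surjective_iff_exists_right_inverse.1 fun y => ?_
  have hrange : LinearMap.range A.mulVecLin = ⊤ := Submodule.eq_top_of_finrank_eq <| by
    rw [← Matrix.rank, h.rank_matrix, Module.finrank_fintype_fun_eq_card]
  exact LinearMap.range_eq_top.1 hrange y

theorem eq_zero_of_mul_eq_zero_of_linearIndependent_row [Fintype m] {C : Matrix l m K}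
    {B : Matrix m n K} (hB : LinearIndependent K B.row) (h : C * B = 0) : C = 0 := by
  ext i k
  have hrow : C i ᵥ* B = 0 ᵥ* B := by
    ext c
    simpa [← mul_apply_eq_vecMul] using congrFun₂ h i c
  exact congrFun (vecMul_injective_iff.2 hB hrow) k

theorem mul_eq_sum_vecMulVec [Fintype m] (X : Matrix l m K) (B : Matrix m n K) :
    X * B = ∑ k, vecMulVec (Xᵀ k) (B k) := by
  ext i c
  simp [mul_apply, vecMulVec_apply, Matrix.sum_apply]

theorem mem_span_vecMulVec_of_mul_eq_zero [Fintype m] [Fintype n] {A : Matrix ι m K}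
    {B : Matrix κ n K} {W : Matrix m n K} (hA : A * W = 0) (hB : W * Bᵀ = 0) :
    W ∈ Submodule.span K {P | ∃ x v, A *ᵥ x = 0 ∧ B *ᵥ v = 0 ∧ P = vecMulVec x v} := by
  let S := LinearMap.ker B.mulVecLin
  have hrow (i : m) : W i ∈ S := by
    rw [LinearMap.mem_ker, mulVecLin_apply, ← vecMul_transpose]
    ext j
    simpa [← mul_apply_eq_vecMul] using congrFun₂ hB i j
  -- Expanding the rows of `W` in a basis of `ker B` gives `W = X * Bs`, and the independence of
  -- the basis turns `A * W = 0` into `A * X = 0`.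
  let b := Module.Free.chooseBasis K S
  let Bs : Matrix _ n K := of fun k => (b k : n → K)
  let X : Matrix m _ K := of fun i k => b.repr ⟨W i, hrow i⟩ k
  have hWX : W = X * Bs := by
    ext i c
    rw [mul_apply_eq_vecMul, vecMul_eq_sum]
    change ((⟨W i, hrow i⟩ : S) : n → K) c = _
    conv_lhs => rw [← b.sum_repr ⟨W i, hrow i⟩]
    simp only [Submodule.coe_sum, Submodule.coe_smul, Finset.sum_apply, Pi.smul_apply]
    rfl
  have hAX : A * X = 0 :=
    eq_zero_of_mul_eq_zero_of_linearIndependent_row (B := Bs)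
      (b.linearIndependent.map' S.subtype S.ker_subtype) (by rw [Matrix.mul_assoc, ← hWX, hA])
  rw [hWX, mul_eq_sum_vecMulVec]
  refine Submodule.sum_mem _ fun k _ => Submodule.subset_span ⟨Xᵀ k, b k, ?_, (b k).2, rfl⟩
  ext z
  exact congrFun₂ hAX z k

end Matrix

section Regions

variable {R α β γ δ : Type*} [Semiring R]

def ofRegions : (Matrix α β R × Matrix γ δ R) ≃ₗ[R] ((α × β) ⊕ (γ × δ) → R) where
  toFun WU := Sum.elim (fun p => WU.1 p.1 p.2) (fun p => WU.2 p.1 p.2)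
  invFun w := (of fun i c => w (.inl (i, c)), of fun x j => w (.inr (x, j)))
  map_add' _ _ := by ext (_ | _) <;> rfl
  map_smul' _ _ := by ext (_ | _) <;> rfl
  left_inv _ := rfl
  right_inv _ := by ext (_ | _) <;> rfl

@[simp]
theorem ofRegions_inl (W : Matrix α β R) (U : Matrix γ δ R) (i : α) (c : β) :
    ofRegions (W, U) (.inl (i, c)) = W i c :=
  rfl

@[simp]
theorem ofRegions_inr (W : Matrix α β R) (U : Matrix γ δ R) (x : γ) (j : δ) :
    ofRegions (W, U) (.inr (x, j)) = U x j :=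
  rfl

theorem ofRegions_eq_zero_iff {W : Matrix α β R} {U : Matrix γ δ R} :
    ofRegions (W, U) = 0 ↔ W = 0 ∧ U = 0 := by
  rw [LinearEquiv.map_eq_zero_iff, Prod.mk_eq_zero]

end Regions

theorem mem_rowSpan_iff {ι κ : Type*} [Fintype ι] [Fintype κ] {M : Matrix ι κ (ZMod 2)}
    {w : κ → ZMod 2} : w ∈ rowSpan M ↔ ∃ y, y ᵥ* M = w := by
  rw [rowSpan, ← row_def, ← range_vecMulLinear, LinearMap.mem_range]
  rfl

section Thickening

variable {nX nZ n r nc : ℕ} (HX : Matrix (Fin nX) (Fin n) (ZMod 2))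
  (HZ : Matrix (Fin nZ) (Fin n) (ZMod 2)) (HC : Matrix (Fin r) (Fin nc) (ZMod 2))

@[simp]
theorem thickZ_inl_inl (z : Fin nZ) (c : Fin nc) (i : Fin n) (c' : Fin nc) :
    thickZ HX HZ HC (.inl (z, c)) (.inl (i, c')) = if c' = c then HZ z i else 0 :=
  rfl

@[simp]
theorem thickZ_inl_inr (s : Fin nZ × Fin nc) (p : Fin nX × Fin r) :
    thickZ HX HZ HC (.inl s) (.inr p) = 0 :=
  rfl

@[simp]
theorem thickZ_inr_inl (i : Fin n) (j : Fin r) (i' : Fin n) (c : Fin nc) :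
    thickZ HX HZ HC (.inr (i, j)) (.inl (i', c)) = if i' = i then HC j c else 0 :=
  rfl

@[simp]
theorem thickZ_inr_inr (i : Fin n) (j : Fin r) (x : Fin nX) (j' : Fin r) :
    thickZ HX HZ HC (.inr (i, j)) (.inr (x, j')) = if j' = j then HX x i else 0 :=
  rfl

@[simp]
theorem thickX_inl (s : Fin nX × Fin nc) (i : Fin n) (c : Fin nc) :
    thickX HX HC s (.inl (i, c)) = if c = s.2 then HX s.1 i else 0 :=
  rfl

@[simp]
theorem thickX_inr (s : Fin nX × Fin nc) (x : Fin nX) (j : Fin r) :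
    thickX HX HC s (.inr (x, j)) = if x = s.1 then HC j s.2 else 0 :=
  rfl

theorem thickZ_mulVec_ofRegions (W : Matrix (Fin n) (Fin nc) (ZMod 2))
    (U : Matrix (Fin nX) (Fin r) (ZMod 2)) :
    thickZ HX HZ HC *ᵥ ofRegions (W, U) = ofRegions (HZ * W, W * HCᵀ + HXᵀ * U) := by
  ext (⟨z, c⟩ | ⟨i, j⟩) <;>
    simp [mulVec, dotProduct, Fintype.sum_sum_type, Fintype.sum_prod_type, mul_apply, mul_comm]

theorem vecMul_thickX (M : Matrix (Fin nX) (Fin nc) (ZMod 2)) :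
    (fun s => M s.1 s.2) ᵥ* thickX HX HC = ofRegions (HXᵀ * M, M * HCᵀ) := by
  ext (⟨i, c⟩ | ⟨x, j⟩) <;>
    simp [vecMul, dotProduct, Fintype.sum_prod_type, mul_apply, mul_ite, mul_comm]

theorem mem_kerMat_thickZ_iff {W : Matrix (Fin n) (Fin nc) (ZMod 2)}
    {U : Matrix (Fin nX) (Fin r) (ZMod 2)} :
    ofRegions (W, U) ∈ kerMat (thickZ HX HZ HC) ↔ HZ * W = 0 ∧ W * HCᵀ + HXᵀ * U = 0 := by
  rw [kerMat, LinearMap.mem_ker, mulVecLin_apply, thickZ_mulVec_ofRegions, ofRegions_eq_zero_iff]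

theorem mem_rowSpan_thickX_iff {w : (Fin n × Fin nc) ⊕ (Fin nX × Fin r) → ZMod 2} :
    w ∈ rowSpan (thickX HX HC) ↔
      ∃ M : Matrix (Fin nX) (Fin nc) (ZMod 2), ofRegions (HXᵀ * M, M * HCᵀ) = w := by
  rw [mem_rowSpan_iff]
  constructor
  · rintro ⟨μ, rfl⟩
    exact ⟨of (Function.curry μ), (vecMul_thickX HX HC _).symm⟩
  · rintro ⟨M, rfl⟩
    exact ⟨_, vecMul_thickX HX HC M⟩

def productLogicals : Set ((Fin n × Fin nc) ⊕ (Fin nX × Fin r) → ZMod 2) :=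
  {w | ∃ (x : Fin n → ZMod 2) (v : Fin nc → ZMod 2),
    HZ.mulVec x = 0 ∧ HC.mulVec v = 0 ∧
      w = Sum.elim (fun p : Fin n × Fin nc => x p.1 * v p.2) (fun _ : Fin nX × Fin r => 0)}

theorem rowSpan_thickX_le_kerMat_thickZ (hcss : HX * HZᵀ = 0) :
    rowSpan (thickX HX HC) ≤ kerMat (thickZ HX HZ HC) := by
  rintro _ hw
  obtain ⟨M, rfl⟩ := (mem_rowSpan_thickX_iff HX HC).1 hw
  have hZX : HZ * HXᵀ = 0 := by simpa [transpose_mul] using congrArg transpose hcss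
  rw [mem_kerMat_thickZ_iff, ← Matrix.mul_assoc, hZX, Matrix.zero_mul, Matrix.mul_assoc]
  exact ⟨rfl, ZModModule.add_self _⟩

theorem span_productLogicals_le_kerMat_thickZ :
    Submodule.span (ZMod 2) (productLogicals HZ HC) ≤ kerMat (thickZ HX HZ HC) := by
  rw [Submodule.span_le]
  rintro _ ⟨x, v, hx, hv, rfl⟩
  change ofRegions (vecMulVec x v, 0) ∈ kerMat _
  rw [mem_kerMat_thickZ_iff, mul_vecMulVec, vecMulVec_mul, vecMul_transpose, hx, hv,
    zero_vecMulVec, Matrix.mul_zero, add_zero]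
  exact ⟨rfl, ext fun _ _ => mul_zero _⟩

theorem ofRegions_mem_span_productLogicals {W : Matrix (Fin n) (Fin nc) (ZMod 2)}
    (hZ : HZ * W = 0) (hC : W * HCᵀ = 0) :
    ofRegions (W, 0) ∈ Submodule.span (ZMod 2) (productLogicals (nX := nX) HZ HC) := by
  refine Submodule.span_mono ?_ (Submodule.apply_mem_span_image_of_mem_span
    (ofRegions.toLinearMap ∘ₗ LinearMap.inl _ _ _) (mem_span_vecMulVec_of_mul_eq_zero hZ hC))
  rintro _ ⟨_, ⟨x, v, hx, hv, rfl⟩, rfl⟩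
  exact ⟨x, v, hx, hv, rfl⟩

theorem exists_eq_add_of_mem_kerMat_thickZ (hcss : HX * HZᵀ = 0)
    (hrank : LinearIndependent (ZMod 2) HC.row)
    {w : (Fin n × Fin nc) ⊕ (Fin nX × Fin r) → ZMod 2} (hw : w ∈ kerMat (thickZ HX HZ HC)) :
    ∃ (M : Matrix (Fin nX) (Fin nc) (ZMod 2)) (W : Matrix (Fin n) (Fin nc) (ZMod 2)),
      HZ * W = 0 ∧ W * HCᵀ = 0 ∧ w = ofRegions (HXᵀ * M, M * HCᵀ) + ofRegions (W, 0) := by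
  obtain ⟨⟨W, U⟩, rfl⟩ := ofRegions.surjective w
  obtain ⟨hZW, hWU⟩ := (mem_kerMat_thickZ_iff HX HZ HC).1 hw
  obtain ⟨N, hN⟩ := exists_mul_eq_one_of_linearIndependent_row hrank
  have hNU : U * Nᵀ * HCᵀ = U := by
    rw [Matrix.mul_assoc, ← transpose_mul, hN, transpose_one, Matrix.mul_one]
  have hZX : HZ * HXᵀ = 0 := by simpa [transpose_mul] using congrArg transpose hcss
  refine ⟨U * Nᵀ, W - HXᵀ * (U * Nᵀ), ?_, ?_, ?_⟩
  · rw [Matrix.mul_sub, hZW, ← Matrix.mul_assoc, hZX, Matrix.zero_mul, sub_zero]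
  · rw [Matrix.sub_mul, Matrix.mul_assoc, hNU, ZModModule.sub_eq_add, hWU]
  · rw [← map_add, hNU, Prod.mk_add_mk, add_sub_cancel, add_zero]

theorem mem_rowSpan_of_ofRegions_vecMulVec_mem_rowSpan_thickX {x : Fin n → ZMod 2}
    {v : Fin nc → ZMod 2} (hv : v ≠ 0)
    (h : ofRegions (vecMulVec x v, 0) ∈ rowSpan (thickX HX HC)) :
    x ∈ rowSpan HX := by
  obtain ⟨M, hM⟩ := (mem_rowSpan_thickX_iff HX HC).1 h
  have hXM : HXᵀ * M = vecMulVec x v := (Prod.ext_iff.1 (ofRegions.injective hM)).1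
  obtain ⟨c, hc⟩ := Function.ne_iff.1 hv
  refine mem_rowSpan_iff.2 ⟨(v c)⁻¹ • Mᵀ c, ?_⟩
  ext i
  rw [smul_vecMul, ← mulVec_transpose, Pi.smul_apply, smul_eq_mul]
  change (v c)⁻¹ * (HXᵀ * M) i c = x i
  rw [hXM, vecMulVec_apply, mul_comm, mul_assoc, mul_inv_cancel₀ hc, mul_one]

end Thickening

/-- **X logical operators of the generalized thickened code** are spanned, modulo the
X stabilizers, by `( (ker H_Z / rowspan H_X) ⊗ ker H_C | 0 )`. -/
theorem thickened_X_logicals {nX nZ n r nc : ℕ}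
    (HX : Matrix (Fin nX) (Fin n) (ZMod 2)) (HZ : Matrix (Fin nZ) (Fin n) (ZMod 2))
    (HC : Matrix (Fin r) (Fin nc) (ZMod 2))
    (hcss : HX * HZ.transpose = 0)
    (hrank : LinearIndependent (ZMod 2) (fun i : Fin r => HC i)) :
    (kerMat (thickZ HX HZ HC) =
        rowSpan (thickX HX HC) ⊔
          Submodule.span (ZMod 2)
            {w : ((Fin n × Fin nc) ⊕ (Fin nX × Fin r)) → ZMod 2 |
              ∃ (x : Fin n → ZMod 2) (v : Fin nc → ZMod 2),
                HZ.mulVec x = 0 ∧ HC.mulVec v = 0 ∧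
                  w = Sum.elim (fun p : Fin n × Fin nc => x p.1 * v p.2)
                        (fun _ : Fin nX × Fin r => 0)}) ∧
      (∀ x : Fin n → ZMod 2, HZ.mulVec x = 0 → x ∉ rowSpan HX →
        ∀ v : Fin nc → ZMod 2, HC.mulVec v = 0 → v ≠ 0 →
          Sum.elim (fun p : Fin n × Fin nc => x p.1 * v p.2)
              (fun _ : Fin nX × Fin r => (0 : ZMod 2)) ∉ rowSpan (thickX HX HC)) := by
  refine ⟨le_antisymm ?_ (sup_le (rowSpan_thickX_le_kerMat_thickZ HX HZ HC hcss)
    (span_productLogicals_le_kerMat_thickZ HX HZ HC)), ?_⟩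
  · intro w hw
    obtain ⟨M, W, hZW, hWC, rfl⟩ := exists_eq_add_of_mem_kerMat_thickZ HX HZ HC hcss hrank hw
    exact Submodule.add_mem _
      (Submodule.mem_sup_left ((mem_rowSpan_thickX_iff HX HC).2 ⟨M, rfl⟩))
      (Submodule.mem_sup_right (ofRegions_mem_span_productLogicals HZ HC hZW hWC))
  · intro x _ hx v _ hv h
    exact hx (mem_rowSpan_of_ofRegions_vecMulVec_mem_rowSpan_thickX HX HC hv h)
end
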